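/- The transformed system μ̇1 = −μ2μ3 + εμ2u2 − ε²μ2μ3, μ̇2 = μ1μ3 − εμ1u2 + ε²μ1μ3, μ̇3 = −μ1μ2, u̇1 = −u2 + εμ3, u̇2 = u1 is Hamiltonian with respect to {·,·}_2 with Hamiltonian H^ε = ½(μ1² + 2μ2² + μ3² + u1² + u2² − 2εμ3u2 + ε²μ3²); that is, each component of the vector field equals {coordinate, H^ε}_2. -/

import Mathlib

noncomputable def pd (i : Fin 5) (f : (Fin 5 → ℝ) → ℝ) (x : Fin 5 → ℝ) : ℝ :=
  fderiv ℝ f x (Pi.single i 1)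

noncomputable def bracket2 (f g : (Fin 5 → ℝ) → ℝ) (x : Fin 5 → ℝ) : ℝ :=
  x 0 * (pd 1 f x * pd 2 g x - pd 2 f x * pd 1 g x)
  + x 1 * (pd 2 f x * pd 0 g x - pd 0 f x * pd 2 g x)
  + pd 4 f x * pd 3 g x - pd 3 f x * pd 4 g x

noncomputable def Heps (ε : ℝ) (y : Fin 5 → ℝ) : ℝ :=
  (1/2) * ((y 0)^2 + 2*(y 1)^2 + (y 2)^2 + (y 3)^2 + (y 4)^2
    - 2*ε*(y 2)*(y 4) + ε^2*(y 2)^2)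

/-!
Bracketing a coordinate function with `g` picks out one partial derivative of `g`, weighted by
`x 0`, `x 1` or `±1` (the Hamiltonian vector field of `g`). For the quadratic `H^ε` these
partials are read off from its differential, a linear form in the direction, and each component
of the vector field then matches by ring arithmetic.
-/

lemma pd_coord (i j : Fin 5) (x : Fin 5 → ℝ) :
    pd i (fun y => y j) x = if i = j then 1 else 0 := by
  simp [pd, fderiv_apply, Pi.single_apply, eq_comm]

lemma bracket2_coord (g : (Fin 5 → ℝ) → ℝ) (x : Fin 5 → ℝ) :
    bracket2 (fun y => y 0) g x = -(x 1 * pd 2 g x) ∧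
    bracket2 (fun y => y 1) g x = x 0 * pd 2 g x ∧
    bracket2 (fun y => y 2) g x = -(x 0 * pd 1 g x) + x 1 * pd 0 g x ∧
    bracket2 (fun y => y 3) g x = -pd 4 g x ∧
    bracket2 (fun y => y 4) g x = pd 3 g x := by
  simp [bracket2, pd_coord]

lemma fderiv_Heps_apply (ε : ℝ) (x v : Fin 5 → ℝ) :
    fderiv ℝ (Heps ε) x v = x 0 * v 0 + 2 * x 1 * v 1 + x 2 * v 2 + x 3 * v 3 + x 4 * v 4
      - ε * (x 2 * v 4 + x 4 * v 2) + ε ^ 2 * x 2 * v 2 := by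
  unfold Heps
  simp (disch := fun_prop) only [fderiv_fun_add, fderiv_fun_sub, fderiv_fun_mul,
    fderiv_fun_pow, fderiv_apply]
  simp only [fderiv_fun_id, ContinuousLinearMap.comp_id, fderiv_fun_const, Pi.zero_apply,
    ContinuousLinearMap.comp_zero, smul_zero, add_zero, add_apply, smul_apply, sub_apply,
    ContinuousLinearMap.proj_apply]
  ring

lemma pd_Heps (ε : ℝ) (x : Fin 5 → ℝ) :
    pd 0 (Heps ε) x = x 0 ∧ pd 1 (Heps ε) x = 2 * x 1 ∧
    pd 2 (Heps ε) x = x 2 - ε * x 4 + ε ^ 2 * x 2 ∧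
    pd 3 (Heps ε) x = x 3 ∧ pd 4 (Heps ε) x = x 4 - ε * x 2 := by
  refine ⟨?_, ?_, ?_, ?_, ?_⟩ <;> simp [pd, fderiv_Heps_apply]

theorem transformed_hamiltonian_bracket2 (ε : ℝ) :
    ∀ x : Fin 5 → ℝ,
      bracket2 (fun y => y 0) (Heps ε) x
        = -(x 1 * x 2) + ε * x 1 * x 4 - ε^2 * x 1 * x 2 ∧
      bracket2 (fun y => y 1) (Heps ε) x
        = x 0 * x 2 - ε * x 0 * x 4 + ε^2 * x 0 * x 2 ∧
      bracket2 (fun y => y 2) (Heps ε) x = -(x 0 * x 1) ∧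
      bracket2 (fun y => y 3) (Heps ε) x = -(x 4) + ε * x 2 ∧
      bracket2 (fun y => y 4) (Heps ε) x = x 3 := by
  intro x
  obtain ⟨b0, b1, b2, b3, b4⟩ := bracket2_coord (Heps ε) x
  obtain ⟨d0, d1, d2, d3, d4⟩ := pd_Heps ε x
  rw [b0, b1, b2, b3, b4, d0, d1, d2, d3, d4]
  refine ⟨?_, ?_, ?_, ?_, ?_⟩ <;> ring
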